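/- Let X be a countable set, P a Markov kernel on X, r : X → ℝ bounded, θ > 0, Λ ∈ ℝ, and f : X → (0, ∞) bounded and bounded below away from 0, satisfying the multiplicative Poisson equation ∑_j e^{θ r(k)} f(j) P(j|k) = e^{θΛ} f(k) for all k. Then for every starting state k, limsup_{T→∞} (1/(θT)) log E_k[ exp(θ ∑_{t=0}^{T−1} r(X_t)) ] = Λ. -/

import Mathlib

open MeasureTheory Real Filter
open scoped ENNReal Topology

/-!
Iterating the multiplicative Poisson equation along the paths of the chain (Tonelli on the
countable path space, in `ℝ≥0∞`) gives the exact identity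
`E_k[exp(θ ∑_{t<T} r(X_t)) f(X_T)] = e^{θΛT} f(k)`. Since `c ≤ f ≤ C`, the plain expectation
`E_k[exp(θ ∑_{t<T} r(X_t))]` lies between `e^{θΛT} f(k) / C` and `e^{θΛT} f(k) / c`, so its
logarithm is `θΛT + O(1)` and the normalised logarithm even converges to `Λ`.
-/

/-- A probability vector on a countable state space. -/
def IsProbVec {X : Type*} (p : X → ℝ) : Prop := (∀ j, 0 ≤ p j) ∧ HasSum p 1

/-- A Markov kernel on a countable state space. -/
def IsMarkovKer {X : Type*} (P : X → X → ℝ) : Prop := ∀ i, IsProbVec (P i)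

/-- The process `Xp` is a Markov chain with kernel `P` under `μ`. -/
def IsMarkovChain {Ω X : Type*} [MeasurableSpace Ω] (μ : Measure Ω)
    (Xp : ℕ → Ω → X) (P : X → X → ℝ) : Prop :=
  ∀ (t : ℕ) (path : Fin (t + 1) → X) (y : X),
    (μ {ω | (∀ i : Fin (t + 1), Xp i ω = path i) ∧ Xp (t + 1) ω = y}).toReal =
      (μ {ω | ∀ i : Fin (t + 1), Xp i ω = path i}).toReal * P (path (Fin.last t)) y

section PathCylinder

variable {Ω X : Type*} {Xp : ℕ → Ω → X}

def pathCylinder (Xp : ℕ → Ω → X) {n : ℕ} (p : Fin n → X) : Set Ω :=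
  {ω | ∀ i : Fin n, Xp i ω = p i}

lemma pathCylinder_snoc {t : ℕ} (p : Fin (t + 1) → X) (y : X) :
    pathCylinder Xp (Fin.snoc p y : Fin (t + 1 + 1) → X) =
      pathCylinder Xp p ∩ {ω | Xp (t + 1) ω = y} := by
  ext ω
  simp only [pathCylinder, Set.mem_inter_iff, Set.mem_ofPred_eq, Fin.forall_fin_succ',
    Fin.snoc_castSucc, Fin.snoc_last, Fin.val_castSucc, Fin.val_last]

variable [MeasurableSpace Ω] {μ : Measure Ω}

lemma IsMarkovChain.measure_pathCylinder_snoc [IsFiniteMeasure μ] {P : X → X → ℝ}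
    (hchain : IsMarkovChain μ Xp P) (hP : ∀ i j, 0 ≤ P i j) {t : ℕ} (p : Fin (t + 1) → X)
    (y : X) :
    μ (pathCylinder Xp (Fin.snoc p y : Fin (t + 1 + 1) → X)) =
      μ (pathCylinder Xp p) * ENNReal.ofReal (P (p (Fin.last t)) y) := by
  rw [pathCylinder_snoc, ← ENNReal.toReal_eq_toReal_iff' (measure_ne_top _ _)
    (ENNReal.mul_ne_top (measure_ne_top _ _) ENNReal.ofReal_ne_top), ENNReal.toReal_mul,
    ENNReal.toReal_ofReal (hP _ _)]
  exact hchain t p y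

variable [MeasurableSpace X] [MeasurableSingletonClass X] [Countable X]

lemma lintegral_comp_path_eq_tsum (hXp : ∀ t, Measurable (Xp t)) {n : ℕ}
    (G : (Fin n → X) → ℝ≥0∞) :
    ∫⁻ ω, G (fun i => Xp i ω) ∂μ = ∑' p, G p * μ (pathCylinder Xp p) := by
  have hpath : Measurable fun ω (i : Fin n) => Xp i ω := measurable_pi_lambda _ fun i => hXp i
  rw [← lintegral_map (measurable_of_countable G) hpath, lintegral_countable']
  congr! 2 with p
  rw [Measure.map_apply hpath (measurableSet_singleton p)]
  congr 2
  ext ω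
  simp [pathCylinder, funext_iff]

end PathCylinder

section FeynmanKac

variable {Ω X : Type*} [MeasurableSpace Ω] {μ : Measure Ω} {Xp : ℕ → Ω → X}
  {Q : X → X → ℝ≥0∞}

lemma tsum_mul_measure_pathCylinder_succ {t : ℕ}
    (hQ : ∀ (p : Fin (t + 1) → X) (y : X),
      μ (pathCylinder Xp (Fin.snoc p y : Fin (t + 1 + 1) → X)) =
        μ (pathCylinder Xp p) * Q (p (Fin.last t)) y)
    (G : (Fin (t + 1 + 1) → X) → ℝ≥0∞) :
    ∑' p, G p * μ (pathCylinder Xp p) =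
      ∑' p : Fin (t + 1) → X,
        μ (pathCylinder Xp p) * ∑' y, Q (p (Fin.last t)) y * G (Fin.snoc p y) := by
  rw [← (Fin.snocEquiv fun _ => X).tsum_eq, ENNReal.tsum_prod', ENNReal.tsum_comm]
  refine tsum_congr fun p => ?_
  rw [← ENNReal.tsum_mul_left]
  refine tsum_congr fun y => ?_
  change G (Fin.snoc p y) * μ (pathCylinder Xp (Fin.snoc p y)) = _
  rw [hQ]
  ring

variable [MeasurableSpace X] [MeasurableSingletonClass X] [Countable X] [IsProbabilityMeasure μ]

theorem lintegral_prod_mul_eq_pow_mul (hXp : ∀ t, Measurable (Xp t)) {k : X}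
    (hstart : ∀ ω, Xp 0 ω = k)
    (hQ : ∀ (t : ℕ) (p : Fin (t + 1) → X) (y : X),
      μ (pathCylinder Xp (Fin.snoc p y : Fin (t + 1 + 1) → X)) =
        μ (pathCylinder Xp p) * Q (p (Fin.last t)) y)
    {a h : X → ℝ≥0∞} {ρ : ℝ≥0∞} (heig : ∀ x, a x * ∑' y, Q x y * h y = ρ * h x) (T : ℕ) :
    ∫⁻ ω, (∏ t ∈ Finset.range T, a (Xp t ω)) * h (Xp T ω) ∂μ = ρ ^ T * h k := by
  have hpaths : ∀ T, ∫⁻ ω, (∏ t ∈ Finset.range T, a (Xp t ω)) * h (Xp T ω) ∂μ =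
      ∑' p : Fin (T + 1) → X,
        (∏ i : Fin T, a (p i.castSucc)) * h (p (Fin.last T)) * μ (pathCylinder Xp p) := by
    intro T
    rw [← lintegral_comp_path_eq_tsum hXp]
    congr with ω
    simp [Fin.prod_univ_eq_prod_range fun t => a (Xp t ω)]
  induction T with
  | zero => simp [hstart]
  | succ T ih =>
    rw [hpaths, tsum_mul_measure_pathCylinder_succ (hQ T), pow_succ', mul_assoc, ← ih, hpaths,
      ← ENNReal.tsum_mul_left]
    refine tsum_congr fun p => ?_
    simp only [Fin.prod_univ_castSucc, Fin.snoc_castSucc, Fin.snoc_last]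
    have hfactor : ∑' y, Q (p (Fin.last T)) y *
          ((∏ i : Fin T, a (p i.castSucc)) * a (p (Fin.last T)) * h y) =
        (∏ i : Fin T, a (p i.castSucc)) *
          (a (p (Fin.last T)) * ∑' y, Q (p (Fin.last T)) y * h y) := by
      rw [← ENNReal.tsum_mul_left, ← ENNReal.tsum_mul_left]
      exact tsum_congr fun y => by ring
    rw [hfactor, heig]
    ring

theorem IsMarkovChain.lintegral_exp_sum_mul_eq {P : X → X → ℝ} (hchain : IsMarkovChain μ Xp P)
    (hP : ∀ i j, 0 ≤ P i j) (hXp : ∀ t, Measurable (Xp t)) {k : X} (hstart : ∀ ω, Xp 0 ω = k)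
    {r : X → ℝ} {θ Λ : ℝ} {f : X → ℝ} (hf : ∀ x, 0 ≤ f x)
    (heq : ∀ x, HasSum (fun y => exp (θ * r x) * f y * P x y) (exp (θ * Λ) * f x)) (T : ℕ) :
    ∫⁻ ω, ENNReal.ofReal (exp (θ * ∑ t ∈ Finset.range T, r (Xp t ω))) *
        ENNReal.ofReal (f (Xp T ω)) ∂μ = ENNReal.ofReal (exp (θ * Λ * T) * f k) := by
  have heig : ∀ x, ENNReal.ofReal (exp (θ * r x)) *
      ∑' y, ENNReal.ofReal (P x y) * ENNReal.ofReal (f y) =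
        ENNReal.ofReal (exp (θ * Λ)) * ENNReal.ofReal (f x) := by
    intro x
    rw [← ENNReal.ofReal_mul (exp_pos _).le, ← (heq x).tsum_eq,
      ENNReal.ofReal_tsum_of_nonneg
        (fun y => mul_nonneg (mul_nonneg (exp_pos _).le (hf y)) (hP x y)) (heq x).summable,
      ← ENNReal.tsum_mul_left]
    refine tsum_congr fun y => ?_
    rw [← ENNReal.ofReal_mul (hP x y), ← ENNReal.ofReal_mul (exp_pos _).le]
    ring_nf
  calc ∫⁻ ω, ENNReal.ofReal (exp (θ * ∑ t ∈ Finset.range T, r (Xp t ω))) *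
        ENNReal.ofReal (f (Xp T ω)) ∂μ
      = ∫⁻ ω, (∏ t ∈ Finset.range T, ENNReal.ofReal (exp (θ * r (Xp t ω)))) *
          ENNReal.ofReal (f (Xp T ω)) ∂μ := by
        congr with ω
        rw [Finset.mul_sum, exp_sum, ENNReal.ofReal_prod_of_nonneg fun t _ => (exp_pos _).le]
    _ = ENNReal.ofReal (exp (θ * Λ)) ^ T * ENNReal.ofReal (f k) :=
        lintegral_prod_mul_eq_pow_mul hXp hstart
          (fun _ p y => hchain.measure_pathCylinder_snoc hP p y) heig T
    _ = ENNReal.ofReal (exp (θ * Λ * T) * f k) := by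
        rw [ENNReal.ofReal_mul (exp_pos _).le, ← ENNReal.ofReal_pow (exp_pos _).le, ← exp_nat_mul,
          mul_comm (T : ℝ)]

end FeynmanKac

lemma integral_sandwich_of_lintegral_mul_eq {Ω : Type*} [MeasurableSpace Ω] {μ : Measure Ω}
    {g φ : Ω → ℝ} (hg : ∀ ω, 0 ≤ g ω) (hgm : AEMeasurable g μ) {c C v : ℝ} (hc : 0 < c)
    (hC : 0 ≤ C) (hφc : ∀ ω, c ≤ φ ω) (hφC : ∀ ω, φ ω ≤ C) (hv : 0 ≤ v)
    (hgφ : ∫⁻ ω, ENNReal.ofReal (g ω) * ENNReal.ofReal (φ ω) ∂μ = ENNReal.ofReal v) :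
    c * ∫ ω, g ω ∂μ ≤ v ∧ v ≤ C * ∫ ω, g ω ∂μ := by
  have hlow : ENNReal.ofReal c * ∫⁻ ω, ENNReal.ofReal (g ω) ∂μ ≤ ENNReal.ofReal v := by
    rw [← hgφ, ← lintegral_const_mul' _ _ ENNReal.ofReal_ne_top]
    refine lintegral_mono fun ω => ?_
    rw [mul_comm]
    gcongr
    exact hφc ω
  have hup : ENNReal.ofReal v ≤ ENNReal.ofReal C * ∫⁻ ω, ENNReal.ofReal (g ω) ∂μ := by
    rw [← hgφ, ← lintegral_const_mul' _ _ ENNReal.ofReal_ne_top]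
    refine lintegral_mono fun ω => ?_
    rw [mul_comm]
    gcongr
    exact hφC ω
  have hfin : ∫⁻ ω, ENNReal.ofReal (g ω) ∂μ ≠ ⊤ := by
    intro htop
    rw [htop, ENNReal.mul_top (by simpa using hc)] at hlow
    exact ENNReal.ofReal_ne_top (top_le_iff.1 hlow)
  rw [integral_eq_lintegral_of_nonneg_ae (ae_of_all _ hg) hgm.aestronglyMeasurable]
  constructor
  · simpa [ENNReal.toReal_mul, hc.le, hv] using ENNReal.toReal_mono ENNReal.ofReal_ne_top hlow
  · simpa [ENNReal.toReal_mul, hC, hv] using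
      ENNReal.toReal_mono (ENNReal.mul_ne_top ENNReal.ofReal_ne_top hfin) hup

lemma tendsto_log_div_natCast_of_exp_bounds {u : ℕ → ℝ} {a b s : ℝ} (ha : 0 < a)
    (hlo : ∀ T : ℕ, a * exp (s * T) ≤ u T) (hhi : ∀ T : ℕ, u T ≤ b * exp (s * T)) :
    Tendsto (fun T : ℕ => log (u T) / T) atTop (𝓝 s) := by
  have hb : 0 < b := ha.trans_le (by simpa using (hlo 0).trans (hhi 0))
  have hlog : ∀ T : ℕ, log a + s * T ≤ log (u T) ∧ log (u T) ≤ log b + s * T := by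
    intro T
    have hu : 0 < u T := (mul_pos ha (exp_pos _)).trans_le (hlo T)
    rw [← log_exp (s * T), ← log_mul ha.ne' (exp_pos _).ne', ← log_mul hb.ne' (exp_pos _).ne']
    exact ⟨log_le_log (by positivity) (hlo T), log_le_log hu (hhi T)⟩
  have hlim : ∀ x : ℝ, Tendsto (fun T : ℕ => s + x / T) atTop (𝓝 s) := fun x => by
    simpa using (tendsto_const_div_atTop_nhds_zero_nat x).const_add s
  refine tendsto_of_tendsto_of_tendsto_of_le_of_le' (hlim (log a)) (hlim (log b)) ?_ ?_ <;>
    filter_upwards [eventually_gt_atTop 0] with T hT <;>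
    rw [add_div' _ _ _ (by positivity), div_le_div_iff_of_pos_right (by positivity)] <;>
    linarith [hlog T]

theorem stmt13_general {Ω X : Type*} [MeasurableSpace Ω]
    [MeasurableSpace X] [MeasurableSingletonClass X] [Countable X]
    (μ : Measure Ω) [IsProbabilityMeasure μ]
    (P : X → X → ℝ) (hP : IsMarkovKer P)
    (r : X → ℝ)
    (θ : ℝ) (hθ : 0 < θ) (Λ : ℝ)
    (f : X → ℝ)
    (hfbdd : ∃ C : ℝ, ∀ k, f k ≤ C) (hfbelow : ∃ c : ℝ, 0 < c ∧ ∀ k, c ≤ f k)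
    (heq : ∀ k, HasSum (fun j => Real.exp (θ * r k) * f j * P k j)
      (Real.exp (θ * Λ) * f k))
    (Xp : ℕ → Ω → X) (hXmeas : ∀ t, Measurable (Xp t))
    (k : X) (hstart : ∀ ω, Xp 0 ω = k)
    (hchain : IsMarkovChain μ Xp P) :
    Filter.limsup
        (fun T : ℕ => 1 / (θ * T) *
          Real.log (∫ ω, Real.exp (θ * ∑ t ∈ Finset.range T, r (Xp t ω)) ∂μ))
        Filter.atTop = Λ := by
  obtain ⟨C, hC⟩ := hfbdd
  obtain ⟨c, hc, hcf⟩ := hfbelow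
  have hfk : 0 < f k := hc.trans_le (hcf k)
  have hCpos : 0 < C := hfk.trans_le (hC k)
  set u : ℕ → ℝ := fun T => ∫ ω, exp (θ * ∑ t ∈ Finset.range T, r (Xp t ω)) ∂μ
  have hbounds : ∀ T : ℕ, c * u T ≤ exp (θ * Λ * T) * f k ∧ exp (θ * Λ * T) * f k ≤ C * u T :=
    fun T => integral_sandwich_of_lintegral_mul_eq (fun ω => (exp_pos _).le) (by fun_prop) hc
      hCpos.le (fun _ => hcf _) (fun _ => hC _) (by positivity)
      (hchain.lintegral_exp_sum_mul_eq (fun i => (hP i).1) hXmeas hstart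
        (fun x => (hc.trans_le (hcf x)).le) heq T)
  have hrate : Tendsto (fun T : ℕ => log (u T) / T) atTop (𝓝 (θ * Λ)) :=
    tendsto_log_div_natCast_of_exp_bounds (b := f k / c) (div_pos hfk hCpos)
      (fun T => by rw [div_mul_eq_mul_div, div_le_iff₀ hCpos]; linarith [(hbounds T).2])
      (fun T => by rw [div_mul_eq_mul_div, le_div_iff₀ hc]; linarith [(hbounds T).1])
  refine Tendsto.limsup_eq ?_
  rw [← mul_div_cancel_left₀ Λ hθ.ne']
  convert hrate.div_const θ using 2 with T
  ring

/-- The risk-sensitive ergodic cost equals the eigenvalue `Λ` of the multiplicative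
Poisson (Bellman) equation (cf. Di Masi–Stettner Prop. 1.1 / Theorem
`relvalfnrepmpeuniq`): if `f > 0` is bounded above and below away from 0 and
`∑_j e^{θr(k)} f(j)P(j|k) = e^{θΛ} f(k)` for all `k`, then
`limsup_T (1/(θT)) log E_k[exp(θ∑_{t<T} r(X_t))] = Λ` for every starting state. -/
theorem stmt13 {Ω X : Type*} [MeasurableSpace Ω]
    [MeasurableSpace X] [MeasurableSingletonClass X] [Countable X]
    (μ : Measure Ω) [IsProbabilityMeasure μ]
    (P : X → X → ℝ) (hP : IsMarkovKer P)
    (r : X → ℝ) (hrbdd : ∃ M : ℝ, ∀ k, |r k| ≤ M)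
    (θ : ℝ) (hθ : 0 < θ) (Λ : ℝ)
    (f : X → ℝ) (hfpos : ∀ k, 0 < f k)
    (hfbdd : ∃ C : ℝ, ∀ k, f k ≤ C) (hfbelow : ∃ c : ℝ, 0 < c ∧ ∀ k, c ≤ f k)
    (heq : ∀ k, HasSum (fun j => Real.exp (θ * r k) * f j * P k j)
      (Real.exp (θ * Λ) * f k))
    (Xp : ℕ → Ω → X) (hXmeas : ∀ t, Measurable (Xp t))
    (k : X) (hstart : ∀ ω, Xp 0 ω = k)
    (hchain : IsMarkovChain μ Xp P) :
    Filter.limsup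
        (fun T : ℕ => 1 / (θ * T) *
          Real.log (∫ ω, Real.exp (θ * ∑ t ∈ Finset.range T, r (Xp t ω)) ∂μ))
        Filter.atTop = Λ :=
  stmt13_general μ P hP r θ hθ Λ f hfbdd hfbelow heq Xp hXmeas k hstart hchain
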